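/- Consider f(x, y) = −x y e^{−x²−y²} + (1/2) y² on ℝ², the feasible set K = {(x, y) ∈ ℝ² : x + y ≤ 0}, and the projected gradient descent map T(p) = P_K(p − ᾱ∇f(p)) with constant step size 0 < ᾱ < 2/3, where P_K denotes Euclidean metric projection onto K. If for some k the iterate (x_k, y_k) of the projected gradient descent sequence satisfies x_k ≥ 0 and y_k = −x_k, then the sequence of iterates {(x_j, y_j)}_{j ≥ k} generated by repeated application of T converges to the origin (0, 0). -/

import Mathlib

/-- The objective `f(x, y) = −x y e^{−x²−y²} + (1/2) y²`. -/
noncomputable def fObj (p : ℝ × ℝ) : ℝ :=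
  -(p.1 * p.2) * Real.exp (-p.1 ^ 2 - p.2 ^ 2) + p.2 ^ 2 / 2

/-- The gradient `∇f(x, y)` of the objective `fObj`. -/
noncomputable def gradF (p : ℝ × ℝ) : ℝ × ℝ :=
  (-(1 - 2 * p.1 ^ 2) * p.2 * Real.exp (-p.1 ^ 2 - p.2 ^ 2),
   -(1 - 2 * p.2 ^ 2) * p.1 * Real.exp (-p.1 ^ 2 - p.2 ^ 2) + p.2)

/-- Euclidean metric projection onto the half-plane `K = {(x, y) : x + y ≤ 0}`. -/
noncomputable def projK (q : ℝ × ℝ) : ℝ × ℝ :=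
  if q.1 + q.2 ≤ 0 then q else (q.1 - (q.1 + q.2) / 2, q.2 - (q.1 + q.2) / 2)

/-- One step of projected gradient descent with step size `a`: `T(p) = P_K(p − a ∇f(p))`. -/
noncomputable def Tmap (a : ℝ) (p : ℝ × ℝ) : ℝ × ℝ :=
  projK (p - a • gradF p)


/-!
On the ray `y = -x`, `x ≥ 0`, the gradient step moves `x + y` up to `a x ≥ 0`, and projecting back onto
`K` returns the point to the ray. So `T` acts on the ray as `x ↦ x (1 - a g(x))` with
`g(x) = (1 - 2x²) e^{-2x²} + 1/2`. Since `(1 - t) e^{-t} ∈ [-1/3, 1]` for `t ≥ 0`, we get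
`g ∈ [1/6, 3/2]`, so for `a < 2/3` this map sends `[0, ∞)` into itself and contracts by `1 - a/6`.
-/

open Filter Topology Set

lemma neg_one_third_le_one_sub_mul_exp_neg (t : ℝ) : -(1 / 3) ≤ (1 - t) * Real.exp (-t) := by
  have h3 : 3 ≤ Real.exp 2 := by linarith [Real.add_one_le_exp 2]
  have hshift : t - 1 ≤ Real.exp (t - 2) := by linarith [Real.add_one_le_exp (t - 2)]
  have hexp : Real.exp t = Real.exp (t - 2) * Real.exp 2 := by rw [← Real.exp_add]; ring_nf
  have hmul : (1 - t) * Real.exp (-t) * Real.exp t = 1 - t := by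
    rw [mul_assoc, ← Real.exp_add, neg_add_cancel, Real.exp_zero, mul_one]
  have hpos := Real.exp_pos t
  nlinarith [Real.exp_pos (t - 2)]

lemma one_sub_mul_exp_neg_le_one {t : ℝ} (ht : 0 ≤ t) : (1 - t) * Real.exp (-t) ≤ 1 := by
  rcases le_total (1 - t) 0 with h | h
  · nlinarith [Real.exp_pos (-t)]
  · have : Real.exp (-t) ≤ 1 := Real.exp_le_one_iff.mpr (by linarith)
    nlinarith

noncomputable def diagGain (x : ℝ) : ℝ := (1 - 2 * x ^ 2) * Real.exp (-(2 * x ^ 2)) + 1 / 2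

lemma one_sixth_le_diagGain (x : ℝ) : 1 / 6 ≤ diagGain x := by
  unfold diagGain
  linarith [neg_one_third_le_one_sub_mul_exp_neg (2 * x ^ 2)]

lemma diagGain_le (x : ℝ) : diagGain x ≤ 3 / 2 := by
  unfold diagGain
  linarith [one_sub_mul_exp_neg_le_one (by positivity : 0 ≤ 2 * x ^ 2)]

noncomputable def diagStep (a x : ℝ) : ℝ := x * (1 - a * diagGain x)

lemma Tmap_diag {a x : ℝ} (ha : 0 ≤ a) (hx : 0 ≤ x) :
    Tmap a (x, -x) = (diagStep a x, -diagStep a x) := by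
  set e := (1 - 2 * x ^ 2) * x * Real.exp (-(2 * x ^ 2))
  have hgrad : (x, -x) - a • gradF (x, -x) = (x - a * e, -x + a * e + a * x) := by
    have hexp : Real.exp (-x ^ 2 - (-x) ^ 2) = Real.exp (-(2 * x ^ 2)) := by ring_nf
    ext <;> simp only [gradF, hexp, e, Prod.fst_sub, Prod.snd_sub, Prod.smul_mk, smul_eq_mul] <;> ring
  rw [Tmap, hgrad, projK, diagStep, diagGain]
  split_ifs with h
  · have hax : a * x = 0 := le_antisymm (by linarith) (mul_nonneg ha hx)
    ext <;> linear_combination (1 / 2 : ℝ) * hax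
  · ext <;> ring

lemma mapsTo_diagStep {a : ℝ} (ha0 : 0 ≤ a) (ha : a ≤ 2 / 3) :
    MapsTo (diagStep a) (Ici 0) (Ici 0) := fun x (hx : 0 ≤ x) => by
  have : a * diagGain x ≤ 1 := by nlinarith [diagGain_le x]
  exact mul_nonneg hx (by linarith)

lemma diagStep_le {a x : ℝ} (ha : 0 ≤ a) (hx : 0 ≤ x) : diagStep a x ≤ (1 - a / 6) * x := by
  have : a / 6 ≤ a * diagGain x := by nlinarith [one_sixth_le_diagGain x]
  unfold diagStep
  nlinarith

lemma tendsto_iterate_nhds_zero_of_le_mul {f : ℝ → ℝ} {c : ℝ} (hc0 : 0 ≤ c) (hc1 : c < 1)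
    (hmaps : MapsTo f (Ici 0) (Ici 0)) (hle : ∀ x, 0 ≤ x → f x ≤ c * x) {x : ℝ} (hx : 0 ≤ x) :
    Tendsto (fun n => f^[n] x) atTop (𝓝 0) := by
  have hnonneg (n : ℕ) : 0 ≤ f^[n] x := hmaps.iterate n hx
  have hbound (n : ℕ) : f^[n] x ≤ c ^ n * x := by
    induction n with
    | zero => simp
    | succ n ih =>
      rw [Function.iterate_succ_apply', pow_succ']
      calc f (f^[n] x) ≤ c * f^[n] x := hle _ (hnonneg n)
        _ ≤ c * (c ^ n * x) := mul_le_mul_of_nonneg_left ih hc0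
        _ = c * c ^ n * x := by ring
  refine squeeze_zero hnonneg hbound ?_
  simpa using (tendsto_pow_atTop_nhds_zero_of_lt_one hc0 hc1).mul_const x

lemma Tmap_orbit_eq_diagStep_iterate {a : ℝ} (ha0 : 0 ≤ a) (ha : a ≤ 2 / 3) {z : ℕ → ℝ × ℝ}
    (hiter : ∀ j, z (j + 1) = Tmap a (z j)) {k : ℕ} {x : ℝ} (hx : 0 ≤ x) (hzk : z k = (x, -x))
    (n : ℕ) : z (n + k) = ((diagStep a)^[n] x, -(diagStep a)^[n] x) := by
  induction n with
  | zero => simpa using hzk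
  | succ n ih =>
    rw [Nat.succ_add, hiter, ih, Tmap_diag ha0 ((mapsTo_diagStep ha0 ha).iterate n hx),
      Function.iterate_succ_apply']

theorem stmt_5 (a : ℝ) (ha0 : 0 < a) (ha : a < 2 / 3)
    (z : ℕ → ℝ × ℝ) (hiter : ∀ j, z (j + 1) = Tmap a (z j))
    (k : ℕ) (hx : 0 ≤ (z k).1) (hy : (z k).2 = -(z k).1) :
    Filter.Tendsto z Filter.atTop (nhds ((0 : ℝ), (0 : ℝ))) := by
  have hlim : Tendsto (fun n => (diagStep a)^[n] (z k).1) atTop (𝓝 0) :=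
    tendsto_iterate_nhds_zero_of_le_mul (by linarith) (by linarith) (mapsTo_diagStep ha0.le ha.le)
      (fun _ => diagStep_le ha0.le) hx
  have horbit := Tmap_orbit_eq_diagStep_iterate ha0.le ha.le hiter hx (Prod.ext rfl hy)
  rw [← tendsto_add_atTop_iff_nat k]
  simp only [horbit]
  simpa using hlim.prodMk_nhds hlim.neg
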